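/- Fix r_1 < ... < r_k, let d = gcd(r_1,...,r_k), and fix n > r_k² such that M_n = ⟨n, n+r_1,...,n+r_k⟩ is primitive. If β is a Betti element of M_n and z, z' are factorizations of β lying in different connected components of the factorization graph ∇_β, then | |z| − |z'| | ∈ {0, d}. -/

import Mathlib

open Finset

/-- Length of a factorization. -/
def vlen {m : ℕ} (z : Fin m → ℕ) : ℕ := ∑ i, z i

/-- Factorization homomorphism of `M_n = ⟨n, n+r_1, ..., n+r_k⟩`. -/
def piM (k n : ℕ) (r : Fin (k + 1) → ℕ) (z : Fin (k + 2) → ℕ) : ℕ :=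
  z 0 * n + ∑ i : Fin (k + 1), z i.succ * (n + r i)

/-- Two factorizations of `β` lie in the same connected component of the factorization
graph `∇_β`: there is a path of factorizations of `β`, consecutive ones sharing a
common positive coordinate. -/
def SameComp {m : ℕ} (π : (Fin m → ℕ) → ℕ) (β : ℕ) :
    (Fin m → ℕ) → (Fin m → ℕ) → Prop :=
  Relation.ReflTransGen (fun a b => π a = β ∧ π b = β ∧ ∃ i, 0 < a i ∧ 0 < b i)

/-- `β` is a Betti element: its factorization graph is disconnected. -/
def IsBetti {m : ℕ} (π : (Fin m → ℕ) → ℕ) (β : ℕ) : Prop :=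
  ∃ z z', π z = β ∧ π z' = β ∧ ¬ SameComp π β z z'

/-- The map `Φ_n` on pairs of factorizations. -/
def Phi (k : ℕ) (p : (Fin (k + 2) → ℕ) × (Fin (k + 2) → ℕ)) :
    (Fin (k + 2) → ℕ) × (Fin (k + 2) → ℕ) :=
  if vlen p.2 < vlen p.1 then
    (p.1 + (vlen p.1 - vlen p.2) • Pi.single (0 : Fin (k + 2)) 1,
     p.2 + (vlen p.1 - vlen p.2) • Pi.single (Fin.last (k + 1)) 1)
  else if vlen p.1 < vlen p.2 then
    (p.1 + (vlen p.2 - vlen p.1) • Pi.single (Fin.last (k + 1)) 1,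
     p.2 + (vlen p.2 - vlen p.1) • Pi.single (0 : Fin (k + 2)) 1)
  else p

/-- The congruence generated by a set of relations `ρ`. -/
inductive CongGen {m : ℕ} (ρ : Set ((Fin m → ℕ) × (Fin m → ℕ))) :
    (Fin m → ℕ) → (Fin m → ℕ) → Prop
  | of {z z'} : (z, z') ∈ ρ → CongGen ρ z z'
  | refl (z) : CongGen ρ z z
  | symm {z z'} : CongGen ρ z z' → CongGen ρ z' z
  | trans {x y z} : CongGen ρ x y → CongGen ρ y z → CongGen ρ x z
  | add {z z'} (u) : CongGen ρ z z' → CongGen ρ (z + u) (z' + u)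

/-- `ρ` is a presentation for the monoid with factorization homomorphism `π`. -/
def IsPres {m : ℕ} (π : (Fin m → ℕ) → ℕ)
    (ρ : Set ((Fin m → ℕ) × (Fin m → ℕ))) : Prop :=
  (∀ p ∈ ρ, π p.1 = π p.2) ∧ ∀ z z', CongGen ρ z z' ↔ π z = π z'

/-- `ρ` is a minimal presentation. -/
def IsMinPres {m : ℕ} (π : (Fin m → ℕ) → ℕ)
    (ρ : Set ((Fin m → ℕ) × (Fin m → ℕ))) : Prop :=
  IsPres π ρ ∧ ∀ ρ' ⊆ ρ, IsPres π ρ' → ρ' = ρ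

/-- Primitivity of `M_n`: the gcd of the generators is 1. -/
def Primitive (k n : ℕ) (r : Fin (k + 1) → ℕ) : Prop :=
  Nat.gcd n (Finset.univ.gcd fun i : Fin (k + 1) => n + r i) = 1

/-- Distance between two factorizations. -/
def fdist {m : ℕ} (z z' : Fin m → ℕ) : ℕ :=
  max (∑ i, (z i - min (z i) (z' i))) (∑ i, (z' i - min (z i) (z' i)))

/-! Write `w(z) = ∑ i, z (i+1) * r i`, so that `piM z = |z| n + w(z)`. For two factorizations of
`β` with `|z| = |z'| + m`, `m n = w(z') - w(z)` is a multiple of `d`, hence so is `m`, since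
primitivity makes `n` coprime to `d`. If `m ≥ 2d`, then `w(z') ≥ 2dn`, and `z`, `z'` are joined
through a factorization `y` of `β` of length `|z'| + d` with `w(y) = w(z') - dn`, chosen to contain
a generator of `z` and one of `z'`. Such a `y` is short enough because, modulo `ρ = r_k`, every
multiple of `d` is a sum of fewer than `ρ` of the `r i < ρ` (a shortest such sum has distinct
partial sums mod `ρ`), the remainder being a multiple of `ρ`; `n > ρ²` absorbs the error. -/

theorem List.exists_sublist_sum_map_eq_length_lt {ι G : Type*} [AddMonoid G] [Fintype G]
    (f : ι → G) (l : List ι) :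
    ∃ l' : List ι, l'.Sublist l ∧ (l'.map f).sum = (l.map f).sum ∧
      l'.length < Fintype.card G := by
  induction h : l.length using Nat.strong_induction_on generalizing l with
  | _ len ih =>
  by_cases hl : l.length < Fintype.card G
  · exact ⟨l, List.Sublist.refl l, rfl, hl⟩
  obtain ⟨a, b, hab, heq⟩ := Fintype.exists_ne_map_eq_of_card_lt
    (fun j : Fin (l.length + 1) => ((l.take j).map f).sum) (by simp only [Fintype.card_fin]; omega)
  wlog hlt : a < b generalizing a b
  · exact this b a hab.symm heq.symm (lt_of_le_of_ne (not_lt.mp hlt) hab.symm)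
  have hsplit := List.take_append_drop b l
  obtain ⟨l', hsub, hsum, hlen⟩ := ih (l.take a ++ l.drop b).length
    (by simp only [List.length_append, List.length_take, List.length_drop]; omega) _ rfl
  refine ⟨l', hsub.trans ?_, hsum.trans ?_, hlen⟩
  · conv_rhs => rw [← hsplit]
    exact (List.take_sublist_take_left hlt.le).append (List.Sublist.refl _)
  · conv_rhs => rw [← hsplit]
    simp only [List.map_append, List.sum_append]
    rw [heq]

theorem AddSubmonoid.exists_multiset_card_lt_of_mem_closure_image {ι G : Type*}
    [AddCommMonoid G] [Fintype G] (f : ι → G) {T : Set ι} {x : G}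
    (hx : x ∈ AddSubmonoid.closure (f '' T)) :
    ∃ s : Multiset ι, (∀ i ∈ s, i ∈ T) ∧ (s.map f).sum = x ∧
      Multiset.card s < Fintype.card G := by
  obtain ⟨s, hsT, rfl⟩ : ∃ s : Multiset ι, (∀ i ∈ s, i ∈ T) ∧ (s.map f).sum = x := by
    induction hx using AddSubmonoid.closure_induction with
    | mem x hx =>
      obtain ⟨i, hi, rfl⟩ := hx
      exact ⟨{i}, by simpa using hi, by simp⟩
    | zero => exact ⟨0, by simp, by simp⟩
    | add x y _ _ hx hy =>
      obtain ⟨s, hs, rfl⟩ := hx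
      obtain ⟨t, ht, rfl⟩ := hy
      exact ⟨s + t, fun i hi => (Multiset.mem_add.mp hi).elim (hs i) (ht i), by simp⟩
  induction s using Quotient.inductionOn with
  | h l =>
  obtain ⟨l', hl', hsum, hlen⟩ := List.exists_sublist_sum_map_eq_length_lt f l
  exact ⟨l', fun i hi => hsT i (hl'.subset hi), by simpa using hsum, by simpa using hlen⟩

theorem natCast_mem_closure_of_gcd_dvd {ι : Type*} [Fintype ι] (r : ι → ℕ) (ρ : ℕ)
    [NeZero ρ] (T : Set ι) (hT : ∀ i ∉ T, ρ ∣ r i) {M : ℕ} (hM : univ.gcd r ∣ M) :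
    (M : ZMod ρ) ∈ AddSubmonoid.closure ((fun i => (r i : ZMod ρ)) '' T) := by
  rw [← AddSubgroup.closure_toAddSubmonoid_of_finite]
  obtain ⟨g, hg⟩ := univ.gcd_eq_sum_mul (fun i => (r i : ℤ))
  obtain ⟨u, hu⟩ : univ.gcd (fun i => (r i : ℤ)) ∣ M := by
    refine Int.natAbs_dvd.mp (Int.natCast_dvd_natCast.mpr (dvd_trans ?_ hM))
    exact Finset.dvd_gcd fun i hi => by
      simpa using Int.natAbs_dvd_natAbs.mpr (Finset.gcd_dvd (f := fun i => (r i : ℤ)) hi)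
  have hcomb : (M : ZMod ρ) = ∑ i, (g i * u) • (r i : ZMod ρ) := by
    have := congrArg (Int.cast : ℤ → ZMod ρ) (hu.trans (by rw [hg]))
    push_cast at this
    rw [this, Finset.sum_mul]
    exact Finset.sum_congr rfl fun i _ => by rw [zsmul_eq_mul]; push_cast; ring
  rw [hcomb]
  refine AddSubgroup.sum_mem _ fun i _ => ?_
  by_cases hi : i ∈ T
  · exact AddSubgroup.zsmul_mem _ (AddSubgroup.subset_closure (Set.mem_image_of_mem _ hi)) _
  · rw [(ZMod.natCast_eq_zero_iff _ _).mpr (hT i hi), smul_zero]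
    exact zero_mem _

theorem exists_multiset_sum_map_eq_card_mul_le {ι : Type*} [Fintype ι] (r : ι → ℕ) (m : ι)
    (hr : ∀ i, r i ≤ r m) (hm : 0 < r m) {M : ℕ} (hM : univ.gcd r ∣ M)
    (hMm : r m ^ 2 < M + 2 * r m) :
    ∃ s : Multiset ι, (s.map r).sum = M ∧
      Multiset.card s * r m + r m ≤ M + r m ^ 2 := by
  have : NeZero (r m) := ⟨hm.ne'⟩
  obtain ⟨s, hsT, hs, hcard⟩ := AddSubmonoid.exists_multiset_card_lt_of_mem_closure_image _
    (natCast_mem_closure_of_gcd_dvd r (r m) {i | r i < r m}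
      (fun i hi => by rw [le_antisymm (hr i) (not_lt.mp hi)]) hM)
  rw [ZMod.card] at hcard
  obtain ⟨p, hp⟩ : ∃ p, r m = p + 1 := ⟨r m - 1, by omega⟩
  set S := (s.map r).sum
  have hS : S ≤ Multiset.card s * p := by
    simpa using Multiset.sum_le_card_nsmul (s.map r) p
      (by simpa using fun i hi => by have : r i < r m := hsT i hi; omega)
  have hSM : S ≤ M := by
    nlinarith [Nat.mul_le_mul_right p (Nat.le_of_lt_succ (hp ▸ hcard))]
  obtain ⟨q, hq⟩ := (Nat.modEq_iff_dvd' hSM).mp <| (ZMod.natCast_eq_natCast_iff _ _ _).mp <| by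
    rw [← hs]
    simp [S, Nat.cast_multiset_sum, Multiset.map_map]
  have hSq : S + q * r m = M := by rw [mul_comm, ← hq]; omega
  refine ⟨s + Multiset.replicate q m, ?_, ?_⟩
  · simpa [Multiset.sum_replicate] using hSq
  · simp only [Multiset.card_add, Multiset.card_replicate]
    nlinarith [Nat.mul_le_mul_right (r m) hcard]

theorem exists_multiset_sum_map_eq_card_le {ι : Type*} [Fintype ι] (r : ι → ℕ) (m : ι)
    (hr : ∀ i, r i ≤ r m) (hr0 : ∀ i, 0 < r i) (i j : ι) {N L : ℕ} (hN : univ.gcd r ∣ N)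
    (hmN : r m ^ 2 < N) (hNL : N + r m ^ 2 ≤ L * r m) :
    ∃ s : Multiset ι, i ∈ s ∧ j ∈ s ∧ (s.map r).sum = N ∧ Multiset.card s ≤ L := by
  obtain ⟨M, rfl⟩ : ∃ M, N = r i + r j + M :=
    Nat.exists_eq_add_of_le (by nlinarith [hr i, hr j, hr0 m])
  have hM : univ.gcd r ∣ M := (Nat.dvd_add_right (dvd_add (gcd_dvd (mem_univ i))
    (gcd_dvd (mem_univ j)))).mp hN
  obtain ⟨t, ht, hcard⟩ := exists_multiset_sum_map_eq_card_mul_le r m hr (hr0 m) hM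
    (by linarith [hr i, hr j])
  refine ⟨i ::ₘ j ::ₘ t, by simp, by simp, by simp [ht, add_assoc], ?_⟩
  have : (Multiset.card t + 2) * r m < (L + 1) * r m := by nlinarith [hr0 i, hr0 j]
  have := Nat.lt_of_mul_lt_mul_right this
  simp only [Multiset.card_cons]
  omega

theorem Multiset.sum_count_mul {ι : Type*} [Fintype ι] [DecidableEq ι] (s : Multiset ι)
    (r : ι → ℕ) : ∑ i, s.count i * r i = (s.map r).sum := by
  rw [Finset.sum_multiset_map_count, ← Finset.sum_subset (subset_univ s.toFinset)]
  · simp only [smul_eq_mul]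
  · intro i _ hi
    rw [Multiset.count_eq_zero.mpr (by simpa using hi), zero_mul]

theorem SameComp.symm {m : ℕ} {π : (Fin m → ℕ) → ℕ} {β : ℕ} {a b : Fin m → ℕ}
    (h : SameComp π β a b) : SameComp π β b a :=
  have : Std.Symm fun a b : Fin m → ℕ =>
      π a = β ∧ π b = β ∧ ∃ i, 0 < a i ∧ 0 < b i :=
    ⟨fun _ _ ⟨ha, hb, i, hai, hbi⟩ => ⟨hb, ha, i, hbi, hai⟩⟩
  Relation.ReflTransGen.stdSymm.symm _ _ h

section

variable {k n : ℕ} {r : Fin (k + 1) → ℕ}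

theorem piM_eq (z : Fin (k + 2) → ℕ) :
    piM k n r z = vlen z * n + ∑ i, z i.succ * r i := by
  simp only [piM, vlen, Fin.sum_univ_succ (f := z), mul_add, sum_add_distrib, add_mul, sum_mul]
  ring

theorem vlen_cons (a : ℕ) (v : Fin (k + 1) → ℕ) :
    vlen (Fin.cons a v : Fin (k + 2) → ℕ) = a + ∑ i, v i := by
  simp [vlen, Fin.sum_univ_succ]

theorem piM_cons (a : ℕ) (v : Fin (k + 1) → ℕ) :
    piM k n r (Fin.cons a v) = (a + ∑ i, v i) * n + ∑ i, v i * r i := by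
  simp [piM_eq, vlen_cons]

theorem sum_succ_mul_le_vlen_mul (hr : ∀ i, r i ≤ r (Fin.last k)) (z : Fin (k + 2) → ℕ) :
    ∑ i, z i.succ * r i ≤ vlen z * r (Fin.last k) :=
  calc ∑ i, z i.succ * r i ≤ ∑ i, z i.succ * r (Fin.last k) :=
        sum_le_sum fun i _ => Nat.mul_le_mul_left _ (hr i)
    _ = (∑ i : Fin (k + 1), z i.succ) * r (Fin.last k) := (sum_mul ..).symm
    _ ≤ vlen z * r (Fin.last k) := Nat.mul_le_mul_right _ <| by
        rw [vlen, Fin.sum_univ_succ (f := z)]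
        exact Nat.le_add_left _ _

theorem Primitive.coprime_gcd (hprim : Primitive k n r) : Nat.Coprime n (univ.gcd r) := by
  have h := Nat.dvd_gcd (Nat.gcd_dvd_left n (univ.gcd r)) (Finset.dvd_gcd fun i hi =>
    dvd_add (Nat.gcd_dvd_left _ _) ((Nat.gcd_dvd_right _ _).trans (Finset.gcd_dvd hi)))
  rw [hprim] at h
  exact Nat.eq_one_of_dvd_one h

theorem gcd_dvd_vlen_sub (hprim : Primitive k n r) {z z' : Fin (k + 2) → ℕ}
    (h : piM k n r z = piM k n r z') (hle : vlen z' ≤ vlen z) :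
    univ.gcd r ∣ vlen z - vlen z' := by
  have hdvd : ∀ x : Fin (k + 2) → ℕ, univ.gcd r ∣ ∑ i, x i.succ * r i := fun x =>
    dvd_sum fun i _ => dvd_mul_of_dvd_right (gcd_dvd (mem_univ i)) _
  obtain ⟨m, hm⟩ := Nat.exists_eq_add_of_le hle
  rw [piM_eq, piM_eq, hm, add_mul] at h
  rw [hm, Nat.add_sub_cancel_left]
  refine hprim.coprime_gcd.symm.dvd_of_dvd_mul_right ((Nat.dvd_add_right (hdvd z)).mp ?_)
  rw [show ∑ i, z i.succ * r i + m * n = ∑ i, z' i.succ * r i by omega]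
  exact hdvd z'

theorem sameComp_of_vlen_add_two_mul_gcd_le (hmono : Monotone r) (hpos : 0 < r 0)
    (hn : r (Fin.last k) ^ 2 < n) {β : ℕ} {z z' : Fin (k + 2) → ℕ}
    (hz : piM k n r z = β) (hz' : piM k n r z' = β)
    (hlen : vlen z' + 2 * univ.gcd r ≤ vlen z) :
    SameComp (piM k n r) β z z' := by
  set d := univ.gcd r
  have hdr : ∀ i, d ∣ r i := fun i => gcd_dvd (mem_univ i)
  have hr : ∀ i, r i ≤ r (Fin.last k) := fun i => hmono (Fin.le_last i)
  have hr0 : ∀ i, 0 < r i := fun i => hpos.trans_le (hmono (Fin.zero_le i))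
  have hd : 0 < d := Nat.pos_of_dvd_of_pos (hdr (Fin.last k)) (hr0 _)
  have hw' : vlen z' * n + ∑ i, z' i.succ * r i = vlen z * n + ∑ i, z i.succ * r i := by
    rw [← piM_eq, ← piM_eq, hz, hz']
  have h2dn : 2 * d * n ≤ ∑ i, z' i.succ * r i := by
    nlinarith [Nat.mul_le_mul_right n hlen, Nat.zero_le (∑ i, z i.succ * r i)]
  obtain ⟨N, hN⟩ := Nat.exists_eq_add_of_le (show d * n ≤ ∑ i, z' i.succ * r i by nlinarith)
  have hdN : d ∣ N := (Nat.dvd_add_right (dvd_mul_right d n)).mp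
    (hN ▸ dvd_sum fun i _ => dvd_mul_of_dvd_right (hdr i) _)
  have hnN : n ≤ N := by nlinarith
  obtain ⟨i₀, -, hi₀⟩ := Finset.sum_pos_iff.mp
    (show 0 < ∑ i, z' i.succ * r i by nlinarith)
  obtain ⟨j, -, hj⟩ := Finset.sum_pos_iff.mp (show 0 < vlen z by omega)
  -- `y 0 ≥ d > 0`, so when `j = 0` any index serves
  obtain ⟨s, hi₀s, hjs, hsN, hsL⟩ := exists_multiset_sum_map_eq_card_le r (Fin.last k) hr
    hr0 i₀ (Fin.cases i₀ id j) (L := vlen z') hdN (by omega)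
    (by nlinarith [sum_succ_mul_le_vlen_mul hr z', Nat.le_mul_of_pos_left n hd])
  set y : Fin (k + 2) → ℕ := Fin.cons (vlen z' + d - Multiset.card s) (fun i => s.count i)
  have hy : piM k n r y = β := by
    rw [piM_cons, Multiset.sum_count_eq_card (fun _ _ => mem_univ _), Multiset.sum_count_mul,
      hsN, Nat.sub_add_cancel (by omega), ← hz', piM_eq, add_mul]
    linarith
  refine .head ⟨hz, hy, j, hj, ?_⟩
    (.single ⟨hy, hz', i₀.succ, ?_, pos_of_mul_pos_left hi₀ (hr0 i₀).le⟩)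
  · cases j using Fin.cases with
    | zero => simp only [y, Fin.cons_zero]; omega
    | succ j => simpa [y] using Multiset.count_pos.mpr hjs
  · simpa [y] using Multiset.count_pos.mpr hi₀s

theorem vlen_eq_or_eq_add_gcd_of_not_sameComp (hmono : Monotone r) (hpos : 0 < r 0)
    (hn : r (Fin.last k) ^ 2 < n) (hprim : Primitive k n r) {β : ℕ} {z z' : Fin (k + 2) → ℕ}
    (hz : piM k n r z = β) (hz' : piM k n r z' = β) (hcomp : ¬ SameComp (piM k n r) β z z')
    (hle : vlen z' ≤ vlen z) :
    vlen z = vlen z' ∨ vlen z = vlen z' + univ.gcd r := by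
  obtain ⟨u, hu⟩ := gcd_dvd_vlen_sub hprim (hz.trans hz'.symm) hle
  have hu2 : u < 2 := by
    by_contra! h
    have := Nat.mul_le_mul_left (univ.gcd r) h
    exact hcomp (sameComp_of_vlen_add_two_mul_gcd_le hmono hpos hn hz hz' (by omega))
  interval_cases u <;> omega

end

theorem stmt5_general (k n : ℕ) (r : Fin (k + 1) → ℕ) (hmono : StrictMono r) (hpos : 0 < r 0)
    (hn : r (Fin.last k) ^ 2 < n) (hprim : Primitive k n r)
    (β : ℕ)
    (z z' : Fin (k + 2) → ℕ) (hz : piM k n r z = β) (hz' : piM k n r z' = β)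
    (hcomp : ¬ SameComp (piM k n r) β z z') :
    ((vlen z : ℤ) - vlen z').natAbs = 0 ∨
      ((vlen z : ℤ) - vlen z').natAbs = Finset.univ.gcd r := by
  rcases le_total (vlen z') (vlen z) with h | h
  · rcases vlen_eq_or_eq_add_gcd_of_not_sameComp hmono.monotone hpos hn hprim hz hz' hcomp h
      with h' | h' <;> omega
  · rcases vlen_eq_or_eq_add_gcd_of_not_sameComp hmono.monotone hpos hn hprim hz' hz
      (fun h' => hcomp h'.symm) h with h' | h' <;> omega

/-- If `n > r_k²` and `M_n` is primitive, any two factorizations of a Betti element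
lying in different connected components of its factorization graph have lengths
differing by `0` or `d = gcd(r_1,...,r_k)`. -/
theorem stmt5 (k n : ℕ) (r : Fin (k + 1) → ℕ) (hmono : StrictMono r) (hpos : 0 < r 0)
    (hn : r (Fin.last k) ^ 2 < n) (hprim : Primitive k n r)
    (β : ℕ) (hB : IsBetti (piM k n r) β)
    (z z' : Fin (k + 2) → ℕ) (hz : piM k n r z = β) (hz' : piM k n r z' = β)
    (hcomp : ¬ SameComp (piM k n r) β z z') :
    ((vlen z : ℤ) - vlen z').natAbs = 0 ∨
      ((vlen z : ℤ) - vlen z').natAbs = Finset.univ.gcd r :=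
  stmt5_general k n r hmono hpos hn hprim β z z' hz hz' hcomp
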